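/- Let $0 < p < 1/2$. There exists a constant $c_p > 0$ such that for every $N \geq 1$, the matrix $A_N = \sum_{n=1}^N n\,(\eta_n \otimes e_{1,n}) \in M_N \otimes M_N$ satisfies $\|A_N\|_{L_p(\tau_N \otimes \mathrm{tr}_N)} \geq c_p N$; in fact one may take $c_p$ of the form $2^{-(1+3/p)}$, i.e. $\left(\frac{1}{N}\sum_{i=1}^{N^2} s_i(A_N)^p\right)^{1/p} \geq c_p N$. -/

import Mathlib

open scoped BigOperators Kronecker

/-- The singular values of a square complex matrix: the square roots of the
eigenvalues of `Aᴴ * A`. -/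
noncomputable def singVal {n : Type*} [Fintype n] [DecidableEq n]
    (A : Matrix n n ℂ) (i : n) : ℝ :=
  Real.sqrt ((Matrix.isHermitian_conjTranspose_mul_self A).eigenvalues i)

/-- The matrix unit `e_{a+1, b+1}` of the paper, in `0`-based indexing:
entry `(i,j)` is `1` iff `i = a` and `j = b`. -/
def ematrix (N a b : ℕ) : Matrix (Fin N) (Fin N) ℂ := fun i j =>
  if (i : ℕ) = a ∧ (j : ℕ) = b then 1 else 0

/-- `η_n = ∑_{k=1}^n e_{k,1} ∈ M_N`. -/
def eta (N n : ℕ) : Matrix (Fin N) (Fin N) ℂ := fun i j =>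
  if (i : ℕ) < n ∧ (j : ℕ) = 0 then 1 else 0

/-- `A_N = ∑_{n=1}^N n (η_n ⊗ e_{1,n}) ∈ M_N ⊗ M_N`. -/
noncomputable def AN (N : ℕ) : Matrix (Fin N × Fin N) (Fin N × Fin N) ℂ :=
  ∑ n ∈ Finset.Icc 1 N, (n : ℂ) • (eta N n ⊗ₖ ematrix N 0 (n - 1))


open Matrix Finset

section auxgeneral

variable {n : Type*} [Fintype n] [DecidableEq n]

lemma dot_self_eq (y : n → ℂ) : star y ⬝ᵥ y = ((∑ q, Complex.normSq (y q) : ℝ) : ℂ) := by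
  simp [dotProduct, Complex.ofReal_sum]
  congr 1; funext q
  simpa [mul_comm] using (Complex.mul_conj (y q))

lemma quad_eq_normSq (A : Matrix n n ℂ) (x : n → ℂ) :
    star x ⬝ᵥ ((Aᴴ * A) *ᵥ x) = ((∑ q, Complex.normSq ((A *ᵥ x) q) : ℝ) : ℂ) := by
  rw [← Matrix.mulVec_mulVec, Matrix.dotProduct_mulVec, ← Matrix.star_mulVec,
    dot_self_eq]

lemma spectral_quad (A : Matrix n n ℂ) (hA : A.IsHermitian) (x : n → ℂ) :
    star x ⬝ᵥ (A *ᵥ x) =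
      ∑ i, ((hA.eigenvalues i : ℂ) *
        ((star (hA.eigenvectorUnitary : Matrix n n ℂ) *ᵥ x) i *
         star ((star (hA.eigenvectorUnitary : Matrix n n ℂ) *ᵥ x) i))) := by
  set V : Matrix n n ℂ := (hA.eigenvectorUnitary : Matrix n n ℂ) with hV
  set y : n → ℂ := star V *ᵥ x with hy
  have h1 : A *ᵥ x = V *ᵥ (Matrix.diagonal (RCLike.ofReal ∘ hA.eigenvalues) *ᵥ y) := by
    rw [hy, Matrix.mulVec_mulVec, Matrix.mulVec_mulVec]
    congr 1
    conv_lhs => rw [hA.spectral_theorem]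
    simp [hV]
  have h2 : star x ᵥ* V = star y := by
    rw [hy, Matrix.star_mulVec]
    congr 1
    simp [Matrix.star_eq_conjTranspose]
  rw [h1, Matrix.dotProduct_mulVec, h2]
  simp only [dotProduct, Matrix.mulVec_diagonal, Pi.star_apply, Function.comp,
    RCLike.ofReal_alg, Complex.coe_algebraMap]
  congr 1; funext i; ring

lemma eig_count (A : Matrix n n ℂ) (s : ℝ) (K : Finset n)
    (hK : ∀ x : n → ℂ, (∀ q, q ∉ K → x q = 0) →
      s * ∑ q, Complex.normSq (x q) ≤ ∑ q, Complex.normSq ((A *ᵥ x) q)) :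
    K.card ≤ (univ.filter fun i =>
      s ≤ (Matrix.isHermitian_conjTranspose_mul_self A).eigenvalues i).card := by
  by_contra hc
  push_neg at hc
  set hG := Matrix.isHermitian_conjTranspose_mul_self A with hhG
  set μ := hG.eigenvalues with hμ
  set V : Matrix n n ℂ := (hG.eigenvectorUnitary : Matrix n n ℂ) with hVdef
  set T : Finset n := univ.filter (fun i => s ≤ μ i) with hT
  have hVu : V * star V = 1 := Matrix.mem_unitaryGroup_iff.mp hG.eigenvectorUnitary.2
  -- the compressed matrix
  set C : Matrix T K ℂ := fun i j => (star V) i.1 j.1 with hC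
  have hninj : ¬ Function.Injective C.mulVecLin := by
    intro h
    have h2 := LinearMap.finrank_le_finrank_of_injective h
    rw [Module.finrank_fintype_fun_eq_card, Module.finrank_fintype_fun_eq_card,
      Fintype.card_coe, Fintype.card_coe] at h2
    omega
  rw [Function.not_injective_iff] at hninj
  obtain ⟨f, g, hfg, hne⟩ := hninj
  set f0 : ↥K → ℂ := f - g with hf0
  have hf00 : f0 ≠ 0 := sub_ne_zero_of_ne hne
  have hCf0 : C *ᵥ f0 = 0 := by
    have : C.mulVecLin f0 = 0 := by rw [hf0, map_sub, hfg, sub_self]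
    simpa [Matrix.mulVecLin_apply] using this
  set x : n → ℂ := fun q => if h : q ∈ K then f0 ⟨q, h⟩ else 0 with hx
  have hxsupp : ∀ q, q ∉ K → x q = 0 := by intro q hq; simp [hx, hq]
  have hx0 : x ≠ 0 := by
    obtain ⟨j, hj⟩ := Function.ne_iff.mp hf00
    intro h
    apply hj
    have : x j.1 = f0 j := by simp [hx, j.2]
    rw [h] at this
    simpa using this.symm
  set y : n → ℂ := star V *ᵥ x with hy
  have hxVy : x = V *ᵥ y := by
    rw [hy, Matrix.mulVec_mulVec, hVu, Matrix.one_mulVec]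
  have hy0 : y ≠ 0 := by
    intro h
    apply hx0
    rw [hxVy, h, Matrix.mulVec_zero]
  have hyT : ∀ i, i ∈ T → y i = 0 := by
    intro i hi
    have h1 : y i = ∑ q ∈ K, (star V) i q * x q := by
      rw [hy]
      show ∑ q, (star V) i q * x q = _
      refine (Finset.sum_subset (Finset.subset_univ K) ?_).symm
      intro q _ hq
      rw [hxsupp q hq, mul_zero]
    have h2 : ∑ q ∈ K, (star V) i q * x q = (C *ᵥ f0) ⟨i, hi⟩ := by
      show _ = ∑ j : ↥K, C ⟨i, hi⟩ j * f0 j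
      rw [← Finset.sum_coe_sort K (fun q => (star V) i q * x q)]
      refine Finset.sum_congr rfl ?_
      intro j _
      simp [hC, hx, j.2]
    rw [h1, h2, hCf0]
    rfl
  -- norms of x and y agree
  have hnorm : ∑ q, Complex.normSq (x q) = ∑ q, Complex.normSq (y q) := by
    have h1 : star y ⬝ᵥ y = star x ⬝ᵥ x := by
      have hsy : star y = star x ᵥ* V := by
        rw [hy, Matrix.star_mulVec]
        congr 1
        simp [Matrix.star_eq_conjTranspose]
      rw [hsy, ← Matrix.dotProduct_mulVec, ← hxVy]
    have := h1
    rw [dot_self_eq, dot_self_eq] at this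
    exact_mod_cast this.symm
  -- the quadratic form identity
  have hquad : ∑ i, μ i * Complex.normSq (y i) = ∑ q, Complex.normSq ((A *ᵥ x) q) := by
    have h1 := spectral_quad (Aᴴ * A) hG x
    rw [quad_eq_normSq] at h1
    have h2 : ∀ i : n, (y i * star (y i)) = ((Complex.normSq (y i) : ℝ) : ℂ) := by
      intro i
      exact Complex.mul_conj (y i)
    rw [← hVdef, ← hy] at h1
    simp only [h2] at h1
    have h3 : ((∑ q, Complex.normSq ((A *ᵥ x) q) : ℝ) : ℂ)
        = ((∑ i, μ i * Complex.normSq (y i) : ℝ) : ℂ) := by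
      rw [h1]
      push_cast
      rfl
    exact_mod_cast h3.symm
  -- strict inequality from spectral side
  have hstrict : ∑ i, μ i * Complex.normSq (y i) < ∑ i, s * Complex.normSq (y i) := by
    obtain ⟨i0, hi0⟩ := Function.ne_iff.mp hy0
    have hi0T : i0 ∉ T := fun h => hi0 (hyT i0 h)
    refine Finset.sum_lt_sum (fun i _ => ?_) ⟨i0, Finset.mem_univ i0, ?_⟩
    · by_cases hi : i ∈ T
      · rw [hyT i hi]; simp
      · have : μ i < s := by
          by_contra h
          exact hi (Finset.mem_filter.mpr ⟨Finset.mem_univ i, not_lt.mp h⟩)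
        exact mul_le_mul_of_nonneg_right this.le (Complex.normSq_nonneg _)
    · have h1 : μ i0 < s := by
        by_contra h
        exact hi0T (Finset.mem_filter.mpr ⟨Finset.mem_univ i0, not_lt.mp h⟩)
      exact mul_lt_mul_of_pos_right h1 (Complex.normSq_pos.mpr hi0)
  have hlow := hK x hxsupp
  rw [hnorm] at hlow
  rw [← hquad] at hlow
  rw [← Finset.mul_sum] at hstrict
  linarith

end auxgeneral

lemma AN_apply (N : ℕ) (i j k l : Fin N) :
    AN N (i, j) (k, l) =
      if (j : ℕ) = 0 ∧ (k : ℕ) = 0 ∧ (i : ℕ) ≤ (l : ℕ) then (((l : ℕ) : ℂ) + 1) else 0 := by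
  unfold AN
  rw [Matrix.sum_apply]
  rw [Finset.sum_eq_single ((l : ℕ) + 1)]
  · simp only [Matrix.smul_apply, Matrix.kroneckerMap_apply, eta, ematrix,
      Nat.add_sub_cancel, smul_eq_mul, Nat.lt_succ_iff]
    by_cases hj : (j : ℕ) = 0 <;> by_cases hk : (k : ℕ) = 0 <;>
      by_cases hi : (i : ℕ) ≤ (l : ℕ) <;>
      simp [hj, hk, hi] <;> push_cast <;> ring
  · intro b hb hbne
    simp only [Finset.mem_Icc] at hb
    simp only [Matrix.smul_apply, Matrix.kroneckerMap_apply, eta, ematrix, smul_eq_mul]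
    split_ifs with h1 h2 <;> try ring
    exfalso
    obtain ⟨-, h12⟩ := h1
    obtain ⟨-, h22⟩ := h2
    omega
  · intro h
    exfalso
    simp only [Finset.mem_Icc] at h
    have := l.is_lt
    omega

lemma normSq_sub_le (a b : ℂ) :
    Complex.normSq (a - b) ≤ 2 * Complex.normSq a + 2 * Complex.normSq b := by
  simp only [Complex.normSq_apply, Complex.sub_re, Complex.sub_im]
  nlinarith [sq_nonneg (a.re + b.re), sq_nonneg (a.im + b.im)]

section quad

variable (N : ℕ) (x : Fin N × Fin N → ℂ)

lemma AN_mulVec (hN : 0 < N) (i j : Fin N) :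
    (AN N *ᵥ x) (i, j) =
      if (j : ℕ) = 0 then
        ∑ l : Fin N, (if (i : ℕ) ≤ (l : ℕ) then (((l : ℕ) : ℂ) + 1) * x (⟨0, hN⟩, l) else 0)
      else 0 := by
  show ∑ q : Fin N × Fin N, AN N (i, j) q * x q = _
  rw [Fintype.sum_prod_type]
  by_cases hj : (j : ℕ) = 0
  · rw [if_pos hj]
    rw [Finset.sum_eq_single (⟨0, hN⟩ : Fin N)]
    · refine Finset.sum_congr rfl fun l _ => ?_
      rw [AN_apply]
      by_cases hi : (i : ℕ) ≤ (l : ℕ) <;> simp [hj, hi]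
    · intro k _ hk
      have hk0 : (k : ℕ) ≠ 0 := fun h => hk (Fin.ext h)
      refine Finset.sum_eq_zero fun l _ => ?_
      rw [AN_apply]
      simp [hk0]
    · intro h; exact absurd (Finset.mem_univ _) h
  · rw [if_neg hj]
    refine Finset.sum_eq_zero fun k _ => Finset.sum_eq_zero fun l _ => ?_
    rw [AN_apply]
    simp [hj]

lemma quad_lower (hN : 0 < N)
    (hxsupp : ∀ q : Fin N × Fin N,
      q ∉ Finset.univ.filter
        (fun q : Fin N × Fin N => (q.1 : ℕ) = 0 ∧ N ≤ 2 * ((q.2 : ℕ) + 1)) → x q = 0) :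
    ((N : ℝ) ^ 2 / 16) * ∑ q, Complex.normSq (x q)
      ≤ ∑ q, Complex.normSq ((AN N *ᵥ x) q) := by
  classical
  set z : Fin N := ⟨0, hN⟩ with hz
  set v : Fin N → ℂ := fun l => x (z, l) with hv
  set w : ℕ → ℂ :=
    fun i => ∑ l : Fin N, (if i ≤ (l : ℕ) then (((l : ℕ) : ℂ) + 1) * v l else 0) with hw
  -- (b) the right side equals ∑ normSq (w i)
  have hb : ∑ q, Complex.normSq ((AN N *ᵥ x) q)
      = ∑ i : Fin N, Complex.normSq (w ((i : ℕ))) := by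
    rw [Fintype.sum_prod_type]
    refine Finset.sum_congr rfl fun i _ => ?_
    rw [Finset.sum_eq_single z]
    · rw [AN_mulVec N x hN, if_pos rfl]
    · intro j _ hj
      have hj0 : (j : ℕ) ≠ 0 := fun h => hj (Fin.ext h)
      rw [AN_mulVec N x hN]
      simp [hj0]
    · intro h; exact absurd (Finset.mem_univ _) h
  -- (d) w N = 0
  have hwN : w N = 0 := by
    refine Finset.sum_eq_zero fun l _ => ?_
    have := l.is_lt
    rw [if_neg (by omega)]
  -- (c) recurrence
  have hc : ∀ l : Fin N, (((l : ℕ) : ℂ) + 1) * v l = w (l : ℕ) - w ((l : ℕ) + 1) := by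
    intro l
    rw [hw]
    simp only
    rw [← Finset.sum_sub_distrib]
    rw [Finset.sum_eq_single l]
    · simp [Nat.lt_irrefl]
    · intro l' _ hl'
      have : (l' : ℕ) ≠ (l : ℕ) := fun h => hl' (Fin.ext h)
      by_cases h1 : (l : ℕ) ≤ (l' : ℕ)
      · rw [if_pos h1, if_pos (by omega), sub_self]
      · rw [if_neg h1, if_neg (by omega), sub_self]
    · intro h; exact absurd (Finset.mem_univ _) h
  -- (e)
  have he : ∑ l : Fin N, (((l : ℕ) : ℝ) + 1) ^ 2 * Complex.normSq (v l)
      ≤ 4 * ∑ i : Fin N, Complex.normSq (w ((i : ℕ))) := by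
    have hterm : ∀ l : Fin N, (((l : ℕ) : ℝ) + 1) ^ 2 * Complex.normSq (v l)
        ≤ 2 * Complex.normSq (w (l : ℕ)) + 2 * Complex.normSq (w ((l : ℕ) + 1)) := by
      intro l
      have h1 : Complex.normSq ((((l : ℕ) : ℂ) + 1) * v l)
          = (((l : ℕ) : ℝ) + 1) ^ 2 * Complex.normSq (v l) := by
        rw [Complex.normSq_mul]
        congr 1
        have : (((l : ℕ) : ℂ) + 1) = (((l : ℕ) + 1 : ℕ) : ℂ) := by push_cast; ring
        rw [this, Complex.normSq_natCast]
        push_cast; ring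
      rw [← h1, hc l]
      exact normSq_sub_le _ _
    calc ∑ l : Fin N, (((l : ℕ) : ℝ) + 1) ^ 2 * Complex.normSq (v l)
        ≤ ∑ l : Fin N, (2 * Complex.normSq (w (l : ℕ)) + 2 * Complex.normSq (w ((l : ℕ) + 1)))
          := Finset.sum_le_sum fun l _ => hterm l
      _ = 2 * (∑ i ∈ Finset.range N, Complex.normSq (w i))
            + 2 * (∑ i ∈ Finset.range N, Complex.normSq (w (i + 1))) := by
          rw [Finset.sum_add_distrib, ← Finset.mul_sum, ← Finset.mul_sum,
            Fin.sum_univ_eq_sum_range (fun i => Complex.normSq (w i)),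
            Fin.sum_univ_eq_sum_range (fun i => Complex.normSq (w (i + 1)))]
      _ ≤ 4 * ∑ i : Fin N, Complex.normSq (w ((i : ℕ))) := by
          rw [Fin.sum_univ_eq_sum_range (fun i => Complex.normSq (w i))]
          have h2 : ∑ i ∈ Finset.range N, Complex.normSq (w (i + 1))
              ≤ ∑ i ∈ Finset.range N, Complex.normSq (w i) := by
            have h3 : ∑ i ∈ Finset.range (N + 1), Complex.normSq (w i)
                = ∑ i ∈ Finset.range N, Complex.normSq (w (i + 1)) + Complex.normSq (w 0) :=
              Finset.sum_range_succ' _ _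
            have h4 : ∑ i ∈ Finset.range (N + 1), Complex.normSq (w i)
                = ∑ i ∈ Finset.range N, Complex.normSq (w i) + Complex.normSq (w N) :=
              Finset.sum_range_succ _ _
            rw [hwN] at h4
            have := Complex.normSq_nonneg (w 0)
            simp only [Complex.normSq_zero, add_zero] at h4
            linarith [h3.symm.trans h4]
          linarith
  -- (g) ∑ normSq x = ∑ normSq v
  have hg : ∑ q, Complex.normSq (x q) = ∑ l : Fin N, Complex.normSq (v l) := by
    rw [Fintype.sum_prod_type]
    rw [Finset.sum_eq_single z]
    · intro k _ hk
      have hk0 : (k : ℕ) ≠ 0 := fun h => hk (Fin.ext h)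
      refine Finset.sum_eq_zero fun l _ => ?_
      rw [hxsupp (k, l) (by simp [hk0]), Complex.normSq_zero]
    · intro h; exact absurd (Finset.mem_univ _) h
  -- (f) weight lower bound
  have hf : ((N : ℝ) ^ 2 / 4) * ∑ l : Fin N, Complex.normSq (v l)
      ≤ ∑ l : Fin N, (((l : ℕ) : ℝ) + 1) ^ 2 * Complex.normSq (v l) := by
    rw [Finset.mul_sum]
    refine Finset.sum_le_sum fun l _ => ?_
    by_cases hvl : v l = 0
    · simp [hvl]
    · have hmem : N ≤ 2 * ((l : ℕ) + 1) := by
        by_contra hcon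
        exact hvl (hxsupp (z, l) (by simp [hz, hcon]))
      have hle : (N : ℝ) ≤ 2 * (((l : ℕ) : ℝ) + 1) := by exact_mod_cast hmem
      have hns := Complex.normSq_nonneg (v l)
      have hNn : (0 : ℝ) ≤ (N : ℝ) := Nat.cast_nonneg N
      have h2 : (N : ℝ) ^ 2 ≤ (2 * (((l : ℕ) : ℝ) + 1)) ^ 2 := by nlinarith
      nlinarith [mul_le_mul_of_nonneg_right h2 hns]
  rw [hb, hg]
  linarith

end quad


lemma card_K (N : ℕ) (hN : 0 < N) :
    (N : ℝ) ≤ 2 * ((Finset.univ.filter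
      (fun q : Fin N × Fin N => (q.1 : ℕ) = 0 ∧ N ≤ 2 * ((q.2 : ℕ) + 1))).card : ℝ) := by
  set z : Fin N := ⟨0, hN⟩ with hz
  set Kl : Finset (Fin N) := Finset.univ.filter (fun l : Fin N => N ≤ 2 * ((l : ℕ) + 1))
    with hKl
  have himg : (Finset.univ.filter
      (fun q : Fin N × Fin N => (q.1 : ℕ) = 0 ∧ N ≤ 2 * ((q.2 : ℕ) + 1)))
      = Kl.image (fun l => (z, l)) := by
    ext ⟨k, l⟩
    simp only [Finset.mem_filter, Finset.mem_univ, true_and, Finset.mem_image, hKl]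
    constructor
    · rintro ⟨hk, hl⟩
      exact ⟨l, by simpa using hl, by rw [show k = z from Fin.ext hk]⟩
    · rintro ⟨l', hl', heq⟩
      have h1 : k = z := (congrArg Prod.fst heq).symm
      have h2 : l' = l := congrArg Prod.snd heq
      subst h2
      exact ⟨by rw [h1], by simpa using hl'⟩
  rw [himg, Finset.card_image_of_injective _ (fun a b h => congrArg Prod.snd h)]
  -- now count Kl
  have hsplit : Kl.card + (Finset.univ.filter
      (fun l : Fin N => ¬ (N ≤ 2 * ((l : ℕ) + 1)))).card = N := by
    rw [hKl, Finset.card_filter_add_card_filter_not]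
    simp
  have hinj : (Finset.univ.filter
      (fun l : Fin N => ¬ (N ≤ 2 * ((l : ℕ) + 1)))).card ≤ Kl.card := by
    refine Finset.card_le_card_of_injOn (fun l => ⟨N - 1 - (l : ℕ), by omega⟩) ?_ ?_
    · intro l hl
      simp only [Finset.mem_coe, Finset.mem_filter, Finset.mem_univ, true_and, not_le] at hl
      simp only [hKl, Finset.mem_coe, Finset.mem_filter, Finset.mem_univ, true_and]
      have := l.is_lt
      omega
    · intro a _ b _ h
      have h2 : N - 1 - (a : ℕ) = N - 1 - (b : ℕ) := congrArg Fin.val h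
      have := a.is_lt
      have := b.is_lt
      exact Fin.ext (by omega)
  have : N ≤ 2 * Kl.card := by omega
  exact_mod_cast this

/-- Part (i) of Lemma 4.1: for `0 < p < 1/2` there is a constant `c_p > 0`
(one may take `c_p = 2^{-(1+3/p)}`) with
`‖A_N‖_{L_p(τ_N ⊗ tr_N)} = (N⁻¹ ∑ᵢ sᵢ(A_N)^p)^{1/p} ≥ c_p N` for all `N ≥ 1`. -/
theorem AN_lp_lower (p : ℝ) (hp0 : 0 < p) (hp : p < 1 / 2) :
    ∃ c : ℝ, c = (2 : ℝ) ^ (-(1 + 3 / p)) ∧ 0 < c ∧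
      ∀ N : ℕ, 1 ≤ N →
        c * N ≤ ((N : ℝ)⁻¹ * ∑ i, singVal (AN N) i ^ p) ^ (1 / p) := by
  refine ⟨(2 : ℝ) ^ (-(1 + 3 / p)), rfl, Real.rpow_pos_of_pos two_pos _, ?_⟩
  intro N hN1
  have hN0 : 0 < N := hN1
  have hNR : (0 : ℝ) < (N : ℝ) := by exact_mod_cast hN0
  classical
  set s : ℝ := (N : ℝ) ^ 2 / 16 with hs
  set K : Finset (Fin N × Fin N) := Finset.univ.filter
    (fun q : Fin N × Fin N => (q.1 : ℕ) = 0 ∧ N ≤ 2 * ((q.2 : ℕ) + 1)) with hK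
  have hcount : K.card ≤ (Finset.univ.filter (fun i =>
      s ≤ (Matrix.isHermitian_conjTranspose_mul_self (AN N)).eigenvalues i)).card :=
    eig_count (AN N) s K (fun x hx => quad_lower N x hN0 hx)
  set T : Finset (Fin N × Fin N) := Finset.univ.filter (fun i =>
      s ≤ (Matrix.isHermitian_conjTranspose_mul_self (AN N)).eigenvalues i) with hT
  have hcardK : (N : ℝ) ≤ 2 * (K.card : ℝ) := card_K N hN0
  have hcardT : (N : ℝ) / 2 ≤ (T.card : ℝ) := by
    have : (K.card : ℝ) ≤ (T.card : ℝ) := by exact_mod_cast hcount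
    linarith
  -- sum lower bound
  have hsum : ((N : ℝ) / 2) * ((N : ℝ) / 4) ^ p ≤ ∑ i, singVal (AN N) i ^ p := by
    have hT4 : ∀ i ∈ T, ((N : ℝ) / 4) ^ p ≤ singVal (AN N) i ^ p := by
      intro i hi
      have hμ : s ≤ (Matrix.isHermitian_conjTranspose_mul_self (AN N)).eigenvalues i :=
        (Finset.mem_filter.mp hi).2
      have h4 : (N : ℝ) / 4 ≤ singVal (AN N) i := by
        have hsq : Real.sqrt s = (N : ℝ) / 4 := by
          rw [show s = ((N : ℝ) / 4) ^ 2 by rw [hs]; ring]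
          exact Real.sqrt_sq (by positivity)
        rw [← hsq]
        exact Real.sqrt_le_sqrt hμ
      exact Real.rpow_le_rpow (by positivity) h4 hp0.le
    calc ((N : ℝ) / 2) * ((N : ℝ) / 4) ^ p
        ≤ (T.card : ℝ) * ((N : ℝ) / 4) ^ p :=
          mul_le_mul_of_nonneg_right hcardT (Real.rpow_nonneg (by positivity) p)
      _ = ∑ _i ∈ T, ((N : ℝ) / 4) ^ p := by rw [Finset.sum_const, nsmul_eq_mul]
      _ ≤ ∑ i ∈ T, singVal (AN N) i ^ p := Finset.sum_le_sum hT4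
      _ ≤ ∑ i, singVal (AN N) i ^ p :=
          Finset.sum_le_sum_of_subset_of_nonneg (Finset.subset_univ T)
            (fun i _ _ => Real.rpow_nonneg (Real.sqrt_nonneg _) p)
  have hmid : (1 / 2 : ℝ) * ((N : ℝ) / 4) ^ p ≤ (N : ℝ)⁻¹ * ∑ i, singVal (AN N) i ^ p := by
    have := mul_le_mul_of_nonneg_left hsum (le_of_lt (inv_pos.mpr hNR))
    calc (1 / 2 : ℝ) * ((N : ℝ) / 4) ^ p
        = (N : ℝ)⁻¹ * (((N : ℝ) / 2) * ((N : ℝ) / 4) ^ p) := by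
          field_simp
      _ ≤ _ := this
  have hfinal : ((1 / 2 : ℝ) * ((N : ℝ) / 4) ^ p) ^ (1 / p)
      ≤ ((N : ℝ)⁻¹ * ∑ i, singVal (AN N) i ^ p) ^ (1 / p) :=
    Real.rpow_le_rpow (by positivity) hmid (by positivity)
  refine le_trans ?_ hfinal
  -- compute the left side
  have hcalc : ((1 / 2 : ℝ) * ((N : ℝ) / 4) ^ p) ^ (1 / p)
      = (2 : ℝ) ^ (-(1 / p)) * ((N : ℝ) / 4) := by
    rw [Real.mul_rpow (by norm_num) (Real.rpow_nonneg (by positivity) p)]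
    congr 1
    · rw [show (1 / 2 : ℝ) = (2 : ℝ)⁻¹ by norm_num, Real.inv_rpow (by norm_num),
        ← Real.rpow_neg (by norm_num)]
    · rw [← Real.rpow_mul (by positivity), mul_one_div, div_self hp0.ne', Real.rpow_one]
  rw [hcalc]
  have h4inv : ((N : ℝ) / 4) = (2 : ℝ) ^ (-(2 : ℝ)) * (N : ℝ) := by
    rw [Real.rpow_neg (by norm_num), show ((2 : ℝ) ^ (2 : ℝ)) = 4 by
      rw [show ((2 : ℝ) : ℝ) = ((2 : ℕ) : ℝ) by norm_num, Real.rpow_natCast]; norm_num]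
    ring
  rw [h4inv, ← mul_assoc, ← Real.rpow_add (by norm_num)]
  refine mul_le_mul_of_nonneg_right ?_ hNR.le
  refine Real.rpow_le_rpow_left_iff (by norm_num : (1 : ℝ) < 2) |>.mpr ?_
  have h2p : (1 : ℝ) ≤ 2 / p := by
    rw [le_div_iff₀ hp0]
    linarith
  have : 1 / p + 2 ≤ 1 + 3 / p := by
    have : 3 / p = 1 / p + 2 / p := by ring
    linarith
  linarith
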